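/- Let p ≥ 1, let OR : {0,1}^p → ℝ, and define Δ(w) = ∑_{u ≤ w} (-1)^{|w|-|u|} OR(u). Fix a binary vector v and an integer i with 0 ≤ i < |v|. Then the truncated expansion ∑_{w ≤ v, |w| ≤ i} Δ(w) equals ∑_{w ≤ v, |w| ≤ i} OR(w) * (-1)^{i - |w|} * C(|v| - 1 - |w|, i - |w|). -/
import Mathlib

/-- The additive increment `Δ(w) = ∑_{u ≤ w} (-1)^{|w|-|u|} OR(u)`. -/
def delta {p : ℕ} (OR : Finset (Fin p) → ℝ) (w : Finset (Fin p)) : ℝ :=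
  ∑ u ∈ w.powerset, (-1 : ℝ) ^ (w.card - u.card) * OR u

open Finset in
lemma alt_partial_sum (m k : ℕ) :
    ∑ j ∈ Finset.range (k + 1), (-1 : ℝ) ^ j * ((m + 1).choose j : ℝ)
      = (-1 : ℝ) ^ k * (m.choose k : ℝ) := by
  induction k with
  | zero => simp
  | succ k ih =>
    rw [Finset.sum_range_succ, ih, Nat.choose_succ_succ]
    push_cast
    ring

open Finset in
lemma sum_card_le {α : Type*} [DecidableEq α] (t : Finset α) (k : ℕ) (f : ℕ → ℝ) :
    ∑ w ∈ t.powerset.filter (fun w => w.card ≤ k), f w.card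
      = ∑ j ∈ Finset.range (k + 1), (t.card.choose j : ℝ) * f j := by
  have hset : t.powerset.filter (fun w => w.card ≤ k)
      = (Finset.range (k + 1)).biUnion (fun j => Finset.powersetCard j t) := by
    ext w
    simp only [Finset.mem_filter, Finset.mem_powerset, Finset.mem_biUnion, Finset.mem_range,
      Nat.lt_succ_iff, Finset.mem_powersetCard]
    constructor
    · rintro ⟨h1, h2⟩; exact ⟨w.card, h2, h1, rfl⟩
    · rintro ⟨a, ha, h1, rfl⟩; exact ⟨h1, ha⟩
  rw [hset, Finset.sum_biUnion]
  · refine Finset.sum_congr rfl fun j _ => ?_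
    rw [Finset.sum_congr rfl (fun w hw => ?_), Finset.sum_const, nsmul_eq_mul,
      Finset.card_powersetCard]
    · exact (Finset.mem_powersetCard.mp hw).2 ▸ rfl
  · intro a _ b _ hab
    simp only [Finset.disjoint_left, Finset.mem_powersetCard]
    rintro w ⟨_, h1⟩ ⟨_, h2⟩
    exact hab (h1.symm.trans h2)

open Finset in
theorem truncated_expansion {p : ℕ} (hp : 1 ≤ p) (OR : Finset (Fin p) → ℝ)
    (v : Finset (Fin p)) (i : ℕ) (hi : i < v.card) :
    ∑ w ∈ v.powerset.filter (fun w => w.card ≤ i), delta OR w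
      = ∑ w ∈ v.powerset.filter (fun w => w.card ≤ i),
          OR w * (-1 : ℝ) ^ (i - w.card)
            * ((v.card - 1 - w.card).choose (i - w.card) : ℝ) := by
  classical
  set S := v.powerset.filter (fun w => w.card ≤ i) with hS
  have hmemS : ∀ w, w ∈ S ↔ w ⊆ v ∧ w.card ≤ i := by
    intro w; simp [hS, Finset.mem_filter, Finset.mem_powerset]
  unfold delta
  rw [Finset.sum_comm' (s' := fun u => S.filter (fun w => u ⊆ w))
    (t' := S) (f := fun w u => (-1 : ℝ) ^ (w.card - u.card) * OR u) ?_]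
  · refine Finset.sum_congr rfl fun u hu => ?_
    obtain ⟨huv, hui⟩ := (hmemS u).mp hu
    -- reindex w ↦ w \ u
    have step1 : ∑ w ∈ S.filter (fun w => u ⊆ w), (-1 : ℝ) ^ (w.card - u.card) * OR u
        = ∑ x ∈ (v \ u).powerset.filter (fun x => x.card ≤ i - u.card),
            (-1 : ℝ) ^ x.card * OR u := by
      refine Finset.sum_nbij' (fun w => w \ u) (fun x => x ∪ u) ?_ ?_ ?_ ?_ ?_
      · intro w hw
        simp only [Finset.mem_filter, hmemS] at hw
        obtain ⟨⟨hwv, hwi⟩, huw⟩ := hw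
        simp only [Finset.mem_filter, Finset.mem_powerset]
        constructor
        · exact Finset.sdiff_subset_sdiff hwv le_rfl
        · rw [Finset.card_sdiff_of_subset huw]
          exact Nat.sub_le_sub_right hwi _
      · intro x hx
        simp only [Finset.mem_filter, Finset.mem_powerset] at hx
        obtain ⟨hxv, hxc⟩ := hx
        simp only [Finset.mem_filter, hmemS]
        refine ⟨⟨Finset.union_subset (hxv.trans (Finset.sdiff_subset)) huv, ?_⟩,
          Finset.subset_union_right⟩
        have hdisj : Disjoint x u := Finset.disjoint_right.mpr fun a ha hax =>
          (Finset.mem_sdiff.mp (hxv hax)).2 ha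
        rw [Finset.card_union_of_disjoint hdisj]
        omega
      · intro w hw
        simp only [Finset.mem_filter, hmemS] at hw
        exact Finset.sdiff_union_of_subset hw.2
      · intro x hx
        simp only [Finset.mem_filter, Finset.mem_powerset] at hx
        have hdisj : Disjoint x u := Finset.disjoint_right.mpr fun a ha hax =>
          (Finset.mem_sdiff.mp (hx.1 hax)).2 ha
        exact Finset.union_sdiff_cancel_right hdisj
      · intro w hw
        simp only [Finset.mem_filter, hmemS] at hw
        rw [Finset.card_sdiff_of_subset hw.2]
    rw [step1]
    have hcards : (v \ u).card = v.card - u.card := Finset.card_sdiff_of_subset huv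
    have huvlt : u.card < v.card := lt_of_le_of_lt hui hi
    have step2 := sum_card_le (v \ u) (i - u.card) (fun j => (-1 : ℝ) ^ j * OR u)
    rw [step2]
    have hm : (v \ u).card = (v.card - u.card - 1) + 1 := by rw [hcards]; omega
    have : ∑ j ∈ Finset.range (i - u.card + 1),
        ((v \ u).card.choose j : ℝ) * ((-1 : ℝ) ^ j * OR u)
        = (∑ j ∈ Finset.range (i - u.card + 1),
            (-1 : ℝ) ^ j * (((v.card - u.card - 1) + 1).choose j : ℝ)) * OR u := by
      rw [Finset.sum_mul]
      refine Finset.sum_congr rfl fun j _ => ?_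
      rw [hm]; ring
    rw [this, alt_partial_sum]
    have hvc : v.card - u.card - 1 = v.card - 1 - u.card := by omega
    rw [hvc]
    ring
  · intro w u
    simp only [Finset.mem_filter, hmemS, Finset.mem_powerset]
    constructor
    · rintro ⟨⟨hwv, hwi⟩, huw⟩
      exact ⟨⟨⟨hwv, hwi⟩, huw⟩, huw.trans hwv, le_trans (Finset.card_le_card huw) hwi⟩
    · rintro ⟨⟨h1, h2⟩, _⟩
      exact ⟨h1, h2⟩
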